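/- arXiv:hep-th/0610045 — 7 statements merged into one kernel-verified Lean document; each statement's English description precedes it below -/
import Mathlib

section
/- Let N ≥ 1 and let λ = (λ_1, …, λ_m) be a partition with all parts positive. Then the differential operator representing Tr(a†²a), namely D₂₁ : f ↦ Σ_{i,j,k=1}^N x_{ij} x_{jk} ∂f/∂x_{ik}, acts on the multi-trace polynomial p_λ by D₂₁ p_λ = Σ_{j=1}^m λ_j · p_{λ^{(j)}}, where λ^{(j)} denotes the partition obtained from λ by replacing the part λ_j with λ_j + 1. -/
open MvPolynomial

/-- The matrix of indeterminates `X`, with entries `x_{ij}` in the polynomial ring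
`ℝ[x_{ij} : 1 ≤ i,j ≤ N]`. -/
noncomputable def Xmat (N : ℕ) : Matrix (Fin N) (Fin N) (MvPolynomial (Fin N × Fin N) ℝ) :=
  fun i j => MvPolynomial.X (i, j)

/-- The trace power `p_k = Tr(X^k)`; in particular `p_0 = N`. -/
noncomputable def trPow (N : ℕ) (k : ℕ) : MvPolynomial (Fin N × Fin N) ℝ :=
  Matrix.trace (Xmat N ^ k)

/-- The multi-trace polynomial `p_λ = p_{λ_1} ⋯ p_{λ_m}` attached to a partition
`λ = (λ_1, …, λ_m)` (given as a list of parts). -/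
noncomputable def multiTrace (N : ℕ) (lam : List ℕ) : MvPolynomial (Fin N × Fin N) ℝ :=
  (lam.map (trPow N)).prod

/-- The differential operator representing `Tr(a†² a)`:
`D₂₁ f = Σ_{i,j,k} x_{ij} x_{jk} ∂f/∂x_{ik}`. -/
noncomputable def D21 (N : ℕ) (f : MvPolynomial (Fin N × Fin N) ℝ) :
    MvPolynomial (Fin N × Fin N) ℝ :=
  ∑ i : Fin N, ∑ j : Fin N, ∑ k : Fin N,
    MvPolynomial.X (i, j) * MvPolynomial.X (j, k) * pderiv (i, k) f

/-! `D₂₁` is the derivation of `ℝ[x_{ij}]` acting on the matrix of indeterminates by `X ↦ X²`.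
Since `X` commutes with `X²`, the Leibniz rule for matrix products gives `D₂₁ (X^k) = k X^{k+1}`
entrywise, hence `D₂₁ p_k = k p_{k+1}` after taking traces; the Leibniz rule for the product
`p_λ = p_{λ_1} ⋯ p_{λ_m}` then yields the formula. -/

namespace Derivation

variable {R A : Type*} [CommSemiring R] [CommSemiring A] [Algebra R A]

theorem leibniz_list_prod_map {M ι : Type*} [AddCommMonoid M] [Module A M] [Module R M]
    (D : Derivation R A M) (f : ι → A) (l : List ι) :
    D (l.map f).prod = ∑ j : Fin l.length, ((l.eraseIdx j).map f).prod • D (f l[(j : ℕ)]) := by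
  induction l with
  | nil => simp
  | cons a t ih =>
    rw [List.map_cons, List.prod_cons, leibniz, ih]
    simp [Fin.sum_univ_succ, Finset.smul_sum, mul_smul, add_comm]

theorem finset_sum_apply {M ι : Type*} [AddCommMonoid M] [Module A M] [Module R M]
    (s : Finset ι) (D : ι → Derivation R A M) (a : A) : (∑ i ∈ s, D i) a = ∑ i ∈ s, D i a := by
  simp only [← coeFnAddMonoidHom_apply, map_sum, Finset.sum_apply]

variable (D : Derivation R A A) {l m n : Type*} [Fintype m]

theorem map_matrix_mul (P : Matrix l m A) (Q : Matrix m n A) :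
    (P * Q).map D = P.map D * Q + P * Q.map D := by
  ext a b
  simp only [Matrix.map_apply, Matrix.mul_apply, Matrix.add_apply, map_sum, leibniz, smul_eq_mul,
    Finset.sum_add_distrib]
  rw [add_comm]
  congr 1
  exact Finset.sum_congr rfl fun _ _ => mul_comm _ _

theorem map_matrix_pow [Fintype n] [DecidableEq n] {P K : Matrix n n A}
    (hP : P.map D = P * K) (hK : Commute P K) (k : ℕ) :
    (P ^ k).map D = k • (P ^ k * K) := by
  induction k with
  | zero => ext a b; by_cases h : a = b <;> simp [h]
  | succ k ih =>
    rw [pow_succ, map_matrix_mul, ih, hP, succ_nsmul, smul_mul_assoc, Matrix.mul_assoc,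
      ← hK.eq, Matrix.mul_assoc]

end Derivation

theorem List.prod_map_set {ι M : Type*} [CommMonoid M] (f : ι → M) {l : List ι} {j : ℕ}
    (hj : j < l.length) (a : ι) :
    ((l.set j a).map f).prod = f a * ((l.eraseIdx j).map f).prod := by
  rw [← CommMonoid.mul_prod_eraseIdx (l := (l.set j a).map f) (by simpa using hj)]
  simp [List.eraseIdx_map, List.eraseIdx_set_eq]

noncomputable def D21Derivation (N : ℕ) :
    Derivation ℝ (MvPolynomial (Fin N × Fin N) ℝ) (MvPolynomial (Fin N × Fin N) ℝ) :=
  ∑ i : Fin N, ∑ j : Fin N, ∑ k : Fin N,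
    (X (i, j) * X (j, k) : MvPolynomial (Fin N × Fin N) ℝ) • pderiv (i, k)

theorem D21Derivation_apply (N : ℕ) (f : MvPolynomial (Fin N × Fin N) ℝ) :
    D21Derivation N f = D21 N f := by
  simp only [D21Derivation, D21, Derivation.finset_sum_apply, Derivation.smul_apply, smul_eq_mul]

theorem map_Xmat_D21Derivation (N : ℕ) : (Xmat N).map (D21Derivation N) = Xmat N * Xmat N := by
  refine Matrix.ext fun a b => ?_
  simp [D21Derivation, Derivation.finset_sum_apply, Xmat, Matrix.mul_apply, pderiv_X,
    Pi.single_apply, ite_and]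

theorem D21_trPow (N k : ℕ) : D21 N (trPow N k) = k * trPow N (k + 1) := by
  rw [← D21Derivation_apply, trPow, AddMonoidHom.map_trace,
    Derivation.map_matrix_pow _ (map_Xmat_D21Derivation N) (Commute.refl _), Matrix.trace_smul,
    ← pow_succ, nsmul_eq_mul, trPow]

theorem trace_adag2_a_on_multiTrace_general (N : ℕ) (lam : List ℕ) :
    D21 N (multiTrace N lam) =
      ∑ j : Fin lam.length,
        (lam.get j : MvPolynomial (Fin N × Fin N) ℝ) *
          multiTrace N (lam.set j (lam.get j + 1)) := by
  rw [multiTrace, ← D21Derivation_apply, Derivation.leibniz_list_prod_map]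
  refine Finset.sum_congr rfl fun j _ => ?_
  rw [D21Derivation_apply, D21_trPow, multiTrace, List.prod_map_set _ j.isLt, smul_eq_mul]
  simp only [List.get_eq_getElem]
  ring

/-- Theorem 1(i) of the paper (unnormalized form): for a partition `λ` with all parts
positive, `D₂₁ p_λ = Σ_{j=1}^m λ_j · p_{λ^{(j)}}`, where `λ^{(j)}` is obtained from `λ`
by replacing the part `λ_j` with `λ_j + 1`. -/
theorem trace_adag2_a_on_multiTrace (N : ℕ) (hN : 1 ≤ N) (lam : List ℕ)
    (hsort : lam.Pairwise (· ≥ ·)) (hpos : ∀ p ∈ lam, 0 < p) :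
    D21 N (multiTrace N lam) =
      ∑ j : Fin lam.length,
        (lam.get j : MvPolynomial (Fin N × Fin N) ℝ) *
          multiTrace N (lam.set j (lam.get j + 1)) :=
  trace_adag2_a_on_multiTrace_general N lam
end

section
/- Let N ≥ 1 and let λ = (λ_1, …, λ_m) be a partition with all parts positive. Then the differential operator representing Tr(a†²a²), namely D₂₂ : f ↦ Σ_{i,j,k,l=1}^N x_{ij} x_{jk} ∂²f/(∂x_{lk} ∂x_{il}), acts on the multi-trace polynomial p_λ by D₂₂ p_λ = Σ_{j : λ_j ≥ 2} λ_j Σ_{s=0}^{λ_j−2} p_{λ_j−s} · p_s · p_{λ ∖ λ_j} + 2 Σ_{1 ≤ j < l ≤ m} λ_j λ_l · p_{λ_j+λ_l} · p_{λ ∖ {λ_j, λ_l}}, where λ ∖ λ_j means λ with the part λ_j deleted, and the factor p_0 = N appears in the s = 0 terms. -/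
open MvPolynomial

/-- The differential operator representing `Tr(a†² a²)`:
`D₂₂ f = Σ_{i,j,k,l} x_{ij} x_{jk} ∂²f/(∂x_{lk} ∂x_{il})`. -/
noncomputable def D22 (N : ℕ) (f : MvPolynomial (Fin N × Fin N) ℝ) :
    MvPolynomial (Fin N × Fin N) ℝ :=
  ∑ i : Fin N, ∑ j : Fin N, ∑ k : Fin N, ∑ l : Fin N,
    MvPolynomial.X (i, j) * MvPolynomial.X (j, k) * pderiv (l, k) (pderiv (i, l) f)

/-!
`D₂₂` is a second-order operator, so `D₂₂ (f g) = D₂₂ f · g + f · D₂₂ g + B_f g`, where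
the polarization `B_f = D22Polar N f` is a derivation in `g`. On trace powers everything
is a trace of powers of `X`, because `∂p_k/∂x_{cd} = k (X^{k-1})_{dc}`: the second
derivatives of `p_n` give the cut terms `n Σ_s p_{n-s} p_s`, and the polarization of
`p_a, p_b` gives the join term `2 a b p_{a+b}`. Induction on the number of parts, using
the Leibniz rule for `B_{p_n}` on `p_μ`, assembles the formula.
-/

open Finset Matrix

theorem Derivation.sum_apply {R A M ι : Type*} [CommSemiring R] [CommSemiring A]
    [Algebra R A] [AddCommMonoid M] [Module A M] [Module R M]
    (s : Finset ι) (D : ι → Derivation R A M) (a : A) :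
    (∑ i ∈ s, D i) a = ∑ i ∈ s, D i a := by
  rw [← Derivation.coeFnAddMonoidHom_apply, map_sum, Finset.sum_apply]
  rfl

theorem Derivation.map_list_prod_map {R A M α : Type*} [CommSemiring R] [CommSemiring A]
    [Algebra R A] [AddCommMonoid M] [Module A M] [Module R M]
    (D : Derivation R A M) (f : α → A) (l : List α) :
    D (l.map f).prod = ∑ i : Fin l.length, ((l.eraseIdx i).map f).prod • D (f (l.get i)) := by
  induction l with
  | nil => simp
  | cons a l ih =>
    rw [List.map_cons, List.prod_cons, Derivation.leibniz, ih]
    simp [Fin.sum_univ_succ, Finset.smul_sum, mul_smul, add_comm]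

theorem Matrix.trace_mul_mul_eq_sum {n R : Type*} [Fintype n] [CommSemiring R]
    (A B C : Matrix n n R) :
    trace (A * B * C) = ∑ i, ∑ j, ∑ k, A i j * B j k * C k i := by
  simp only [trace, diag, mul_apply, sum_mul]
  exact sum_congr rfl fun i _ => sum_comm

section

variable {N : ℕ}

theorem Xmat_apply (i j : Fin N) : Xmat N i j = X (i, j) := rfl

theorem trace_Xmat_pow (k : ℕ) : trace (Xmat N ^ k) = trPow N k := rfl

theorem Xmat_mul_Xmat_mul_pow (m : ℕ) : Xmat N * Xmat N * Xmat N ^ m = Xmat N ^ (m + 2) := by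
  rw [mul_assoc, ← pow_succ', ← pow_succ']

theorem sum_X_mul_X_mul_eq_trace
    (F : Fin N → Fin N → Fin N → MvPolynomial (Fin N × Fin N) ℝ) :
    ∑ i, ∑ j, ∑ k, ∑ l, X (i, j) * X (j, k) * F i k l =
      trace (Xmat N * Xmat N * of fun k i => ∑ l, F i k l) := by
  simp [trace_mul_mul_eq_sum, Xmat_apply, mul_sum]

theorem pderiv_Xmat_pow_succ_apply (m : ℕ) (a b c d : Fin N) :
    pderiv (c, d) ((Xmat N ^ (m + 1)) a b) =
      ∑ r ∈ range (m + 1), (Xmat N ^ r) a c * (Xmat N ^ (m - r)) d b := by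
  induction m generalizing a b with
  | zero =>
    simp only [zero_add, pow_one, Xmat_apply, pderiv_X, Pi.single_apply, Prod.mk.injEq,
      sum_range_one, pow_zero, one_apply, tsub_zero, mul_ite, mul_one, mul_zero]
    split_ifs <;> simp_all
  | succ m ih =>
    rw [pow_succ', mul_apply, map_sum, sum_range_succ']
    simp only [pderiv_mul, ih, Xmat_apply, pderiv_X, Pi.single_apply, mul_sum, sum_add_distrib]
    rw [add_comm]
    congr 1
    · rw [sum_comm]
      refine sum_congr rfl fun r _ => ?_
      simp only [pow_succ' _ r, mul_apply, sum_mul, Xmat_apply, mul_assoc, Nat.add_sub_add_right]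
    · simp [Prod.mk.injEq, ite_and, one_apply]

theorem pderiv_trPow (k : ℕ) (c d : Fin N) :
    pderiv (c, d) (trPow N k) = k * (Xmat N ^ (k - 1)) d c := by
  rcases k with _ | k
  · simp [trPow]
  · have hterm : ∀ r ∈ range (k + 1),
        ∑ a, (Xmat N ^ r) a c * (Xmat N ^ (k - r)) d a = (Xmat N ^ k) d c := by
      intro r hr
      simp only [mul_comm ((Xmat N ^ r) _ c), ← mul_apply, ← pow_add,
        Nat.sub_add_cancel (mem_range_succ_iff.mp hr)]
    simp only [trPow, trace, Matrix.diag, map_sum, pderiv_Xmat_pow_succ_apply]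
    rw [sum_comm, sum_congr rfl hterm]
    simp

noncomputable def D22Polar (N : ℕ) (f : MvPolynomial (Fin N × Fin N) ℝ) :
    Derivation ℝ (MvPolynomial (Fin N × Fin N) ℝ) (MvPolynomial (Fin N × Fin N) ℝ) :=
  ∑ i : Fin N, ∑ j : Fin N, ∑ k : Fin N, ∑ l : Fin N,
    (X (i, j) * X (j, k) : MvPolynomial (Fin N × Fin N) ℝ) •
      (pderiv (i, l) f • pderiv (l, k) + pderiv (l, k) f • pderiv (i, l))

theorem D22Polar_apply (f g : MvPolynomial (Fin N × Fin N) ℝ) :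
    D22Polar N f g = ∑ i, ∑ j, ∑ k, ∑ l, X (i, j) * X (j, k) *
      (pderiv (i, l) f * pderiv (l, k) g + pderiv (l, k) f * pderiv (i, l) g) := by
  simp only [D22Polar, Derivation.sum_apply, Derivation.smul_apply, Derivation.add_apply,
    smul_eq_mul]

theorem D22_mul (f g : MvPolynomial (Fin N × Fin N) ℝ) :
    D22 N (f * g) = D22 N f * g + f * D22 N g + D22Polar N f g := by
  have hterm : ∀ i j k l : Fin N,
      X (i, j) * X (j, k) * pderiv (l, k) (pderiv (i, l) (f * g)) =
        X (i, j) * X (j, k) * pderiv (l, k) (pderiv (i, l) f) * g +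
        f * (X (i, j) * X (j, k) * pderiv (l, k) (pderiv (i, l) g)) +
        X (i, j) * X (j, k) *
          (pderiv (i, l) f * pderiv (l, k) g + pderiv (l, k) f * pderiv (i, l) g) := by
    intro i j k l
    simp only [pderiv_mul, map_add]
    ring
  simp only [D22, D22Polar_apply, hterm, sum_add_distrib, sum_mul, mul_sum]

theorem D22Polar_trPow (a b : ℕ) :
    D22Polar N (trPow N a) (trPow N b) = 2 * a * b * trPow N (a + b) := by
  rcases a with _ | a
  · simp [D22Polar_apply, pderiv_trPow]
  rcases b with _ | b
  · simp [D22Polar_apply, pderiv_trPow]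
  have hinner : (of fun k i => ∑ l,
      (pderiv (i, l) (trPow N (a + 1)) * pderiv (l, k) (trPow N (b + 1)) +
        pderiv (l, k) (trPow N (a + 1)) * pderiv (i, l) (trPow N (b + 1)))) =
      (2 * (a + 1) * (b + 1) : MvPolynomial (Fin N × Fin N) ℝ) • Xmat N ^ (a + b) := by
    ext k i : 1
    have hba : (Xmat N ^ (a + b)) k i = ∑ l, (Xmat N ^ b) k l * (Xmat N ^ a) l i := by
      rw [add_comm, pow_add, mul_apply]
    have hab : (Xmat N ^ (a + b)) k i = ∑ l, (Xmat N ^ a) k l * (Xmat N ^ b) l i := by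
      rw [pow_add, mul_apply]
    rw [Matrix.smul_apply, smul_eq_mul,
      show (2 * (a + 1) * (b + 1) : MvPolynomial (Fin N × Fin N) ℝ) * (Xmat N ^ (a + b)) k i =
        (a + 1) * (b + 1) * (Xmat N ^ (a + b)) k i + (a + 1) * (b + 1) * (Xmat N ^ (a + b)) k i
        by ring]
    nth_rewrite 1 [hba]
    rw [hab, mul_sum, mul_sum, ← sum_add_distrib, of_apply]
    refine sum_congr rfl fun l _ => ?_
    simp only [pderiv_trPow, add_tsub_cancel_right]
    push_cast
    ring
  rw [D22Polar_apply, sum_X_mul_X_mul_eq_trace, hinner, mul_smul_comm, trace_smul,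
    Xmat_mul_Xmat_mul_pow, trace_Xmat_pow, smul_eq_mul]
  rw [show a + b + 2 = a + 1 + (b + 1) by ring]
  push_cast
  ring

theorem D22_trPow (n : ℕ) :
    D22 N (trPow N n) =
      n * ∑ s ∈ range (n - 1), trPow N (n - s) * trPow N s := by
  rcases n with _ | _ | m
  · simp [D22, pderiv_trPow]
  · simp [D22, pderiv_trPow, one_apply, apply_ite]
  have hinner : (of fun k i => ∑ l, pderiv (l, k) (pderiv (i, l) (trPow N (m + 2)))) =
      ((m + 2 : ℕ) : MvPolynomial (Fin N × Fin N) ℝ) •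
        ∑ r ∈ range (m + 1), trPow N r • Xmat N ^ (m - r) := by
    ext k i : 1
    simp only [of_apply, pderiv_trPow, show m + 2 - 1 = m + 1 from rfl, Derivation.leibniz,
      Derivation.map_natCast, mul_zero, add_zero, pderiv_Xmat_pow_succ_apply, Matrix.smul_apply,
      Matrix.sum_apply, smul_eq_mul, ← mul_sum]
    rw [sum_comm]
    congr 1
    refine sum_congr rfl fun r _ => ?_
    rw [← sum_mul]
    rfl
  rw [D22, sum_X_mul_X_mul_eq_trace, hinner, mul_smul_comm, trace_smul, mul_sum, trace_sum,
    smul_eq_mul]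
  congr 1
  refine sum_congr rfl fun r hr => ?_
  rw [mul_smul_comm, trace_smul, Xmat_mul_Xmat_mul_pow, trace_Xmat_pow, smul_eq_mul, mul_comm,
    show m - r + 2 = m + 2 - r by have := mem_range.mp hr; omega]

theorem multiTrace_cons (n : ℕ) (μ : List ℕ) :
    multiTrace N (n :: μ) = trPow N n * multiTrace N μ := List.prod_cons

theorem D22Polar_trPow_multiTrace (n : ℕ) (μ : List ℕ) :
    D22Polar N (trPow N n) (multiTrace N μ) =
      2 * ∑ t : Fin μ.length, (n : MvPolynomial (Fin N × Fin N) ℝ) * μ.get t *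
        trPow N (n + μ.get t) * multiTrace N (μ.eraseIdx t) := by
  rw [multiTrace, Derivation.map_list_prod_map, mul_sum]
  refine sum_congr rfl fun t _ => ?_
  rw [D22Polar_trPow, smul_eq_mul, multiTrace]
  ring

noncomputable def cutSum (N : ℕ) (lam : List ℕ) : MvPolynomial (Fin N × Fin N) ℝ :=
  ∑ j : Fin lam.length,
    (lam.get j : MvPolynomial (Fin N × Fin N) ℝ) *
      ∑ s ∈ Finset.range (lam.get j - 1),
        trPow N (lam.get j - s) * trPow N s * multiTrace N (lam.eraseIdx j)

noncomputable def joinSum (N : ℕ) (lam : List ℕ) : MvPolynomial (Fin N × Fin N) ℝ :=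
  ∑ j : Fin lam.length, ∑ l : Fin lam.length,
    if (j : ℕ) < (l : ℕ) then
      (lam.get j : MvPolynomial (Fin N × Fin N) ℝ) * (lam.get l) *
        trPow N (lam.get j + lam.get l) *
        multiTrace N ((lam.eraseIdx l).eraseIdx j)
    else 0

theorem cutSum_cons (n : ℕ) (μ : List ℕ) :
    cutSum N (n :: μ) =
      (n * ∑ s ∈ range (n - 1), trPow N (n - s) * trPow N s) * multiTrace N μ +
        trPow N n * cutSum N μ := by
  simp only [cutSum, List.length_cons, List.get_eq_getElem, Fin.sum_univ_succ, Fin.val_zero,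
    Fin.val_succ, List.getElem_cons_zero, List.getElem_cons_succ, List.eraseIdx_zero,
    List.tail_cons, List.eraseIdx_cons_succ, multiTrace_cons, mul_sum, sum_mul]
  exact congrArg₂ (· + ·) (sum_congr rfl fun _ _ => by ring)
    (sum_congr rfl fun _ _ => sum_congr rfl fun _ _ => by ring)

theorem joinSum_cons (n : ℕ) (μ : List ℕ) :
    joinSum N (n :: μ) =
      ∑ t : Fin μ.length, (n : MvPolynomial (Fin N × Fin N) ℝ) * μ.get t *
        trPow N (n + μ.get t) * multiTrace N (μ.eraseIdx t) + trPow N n * joinSum N μ := by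
  simp only [joinSum, List.length_cons, List.get_eq_getElem, Fin.val_fin_lt, Fin.sum_univ_succ,
    Fin.val_zero, Fin.val_succ, Fin.succ_pos, Fin.succ_lt_succ_iff, not_lt_zero, if_true, if_false,
    List.getElem_cons_zero, List.getElem_cons_succ, List.eraseIdx_zero, List.tail_cons,
    List.eraseIdx_cons_succ, multiTrace_cons, zero_add, mul_sum, mul_ite, mul_zero, add_right_inj]
  refine sum_congr rfl fun _ _ => sum_congr rfl fun _ _ => ?_
  split_ifs <;> ring

theorem D22_multiTrace (lam : List ℕ) :
    D22 N (multiTrace N lam) = cutSum N lam + 2 * joinSum N lam := by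
  induction lam with
  | nil => simp [multiTrace, cutSum, joinSum, D22]
  | cons n μ ih =>
    rw [multiTrace_cons, D22_mul, ih, D22_trPow, D22Polar_trPow_multiTrace, cutSum_cons,
      joinSum_cons]
    ring

end

theorem trace_adag2_a2_on_multiTrace_general (N : ℕ) (lam : List ℕ) :
    D22 N (multiTrace N lam) =
      (∑ j : Fin lam.length,
        (lam.get j : MvPolynomial (Fin N × Fin N) ℝ) *
          ∑ s ∈ Finset.range (lam.get j - 1),
            trPow N (lam.get j - s) * trPow N s * multiTrace N (lam.eraseIdx j))
      + 2 * ∑ j : Fin lam.length, ∑ l : Fin lam.length,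
          if (j : ℕ) < (l : ℕ) then
            (lam.get j : MvPolynomial (Fin N × Fin N) ℝ) * (lam.get l) *
              trPow N (lam.get j + lam.get l) *
              multiTrace N ((lam.eraseIdx l).eraseIdx j)
          else 0 :=
  D22_multiTrace lam

/-- Theorem 1(ii) of the paper (unnormalized form): for a partition `λ` with all parts
positive,
`D₂₂ p_λ = Σ_{j : λ_j ≥ 2} λ_j Σ_{s=0}^{λ_j−2} p_{λ_j−s} p_s p_{λ∖λ_j}
  + 2 Σ_{j<l} λ_j λ_l p_{λ_j+λ_l} p_{λ∖{λ_j,λ_l}}`,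
where `λ ∖ λ_j` deletes the part `λ_j` (for a part `λ_j = 1` the inner sum over
`s` is empty, so the first sum effectively runs over the parts `λ_j ≥ 2`), and the
factor `p_0 = N` appears in the `s = 0` terms. -/
theorem trace_adag2_a2_on_multiTrace (N : ℕ) (hN : 1 ≤ N) (lam : List ℕ)
    (hsort : lam.Pairwise (· ≥ ·)) (hpos : ∀ p ∈ lam, 0 < p) :
    D22 N (multiTrace N lam) =
      (∑ j : Fin lam.length,
        (lam.get j : MvPolynomial (Fin N × Fin N) ℝ) *
          ∑ s ∈ Finset.range (lam.get j - 1),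
            trPow N (lam.get j - s) * trPow N s * multiTrace N (lam.eraseIdx j))
      + 2 * ∑ j : Fin lam.length, ∑ l : Fin lam.length,
          if (j : ℕ) < (l : ℕ) then
            (lam.get j : MvPolynomial (Fin N × Fin N) ℝ) * (lam.get l) *
              trPow N (lam.get j + lam.get l) *
              multiTrace N ((lam.eraseIdx l).eraseIdx j)
          else 0 :=
  trace_adag2_a2_on_multiTrace_general N lam
end

section
/- Fix b ≥ 0 and m ≥ 1. Suppose w : ℤ≥1 → ℝ is not identically zero and satisfies Σ_{k≥1} M(n,k) w(k) = 0 for all n ≥ 1 (a zero mode of the single-trace planar Hamiltonian, which exists for b > 1). If f : (ℤ≥1)^m → ℝ is a nonzero function with H^(m) f = E f, then the function g(n_1, …, n_{m+1}) = f(n_1, …, n_m) w(n_{m+1}) is nonzero and satisfies H^(m+1) g = E g. Consequently every eigenvalue of H^(m) is an eigenvalue of H^(m') for every m' ≥ m, so each planar eigenvalue is infinitely degenerate across the sectors with a fixed number of traces. -/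
/-- The single-trace planar Hamiltonian of the Veneziano–Wosiek SuSy model in the
bosonic sector: the tridiagonal matrix with entries
`M(n,m) = (1 + b²(1 − δ_{n1})) n δ_{nm} + b√(m(m+1)) δ_{n,m+1} + b√(n(n+1)) δ_{m,n+1}`,
indices `n, m ≥ 1`. -/
noncomputable def VWmat (b : ℝ) (n m : ℕ) : ℝ :=
  (1 + b ^ 2 * (1 - if n = 1 then 1 else 0)) * n * (if n = m then 1 else 0)
    + b * Real.sqrt (m * (m + 1)) * (if n = m + 1 then 1 else 0)
    + b * Real.sqrt (n * (n + 1)) * (if m = n + 1 then 1 else 0)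

/-- The planar Hamiltonian `H^(m)` on the `m`-trace sector, acting on functions
`f : (ℤ≥1)^m → ℝ` (realized as functions on `ℕ^m`, with only arguments `≥ 1` relevant):
`(H^(m) f)(n_1,…,n_m) = Σ_{j=1}^m Σ_{k≥1} M(n_j, k) f(n_1,…,k,…,n_m)`. -/
noncomputable def planarH (b : ℝ) (m : ℕ) (f : (Fin m → ℕ) → ℝ) (x : Fin m → ℕ) : ℝ :=
  ∑ j : Fin m, ∑' k : ℕ, if 1 ≤ k then VWmat b (x j) k * f (Function.update x j k) else 0

/-- `E` is an eigenvalue of `H^(m)`: some function, not identically zero on the lattice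
`(ℤ≥1)^m`, satisfies `H^(m) f = E f` there. -/
noncomputable def IsPlanarEigenvalue (b : ℝ) (m : ℕ) (E : ℝ) : Prop :=
  ∃ f : (Fin m → ℕ) → ℝ,
    (∃ x : Fin m → ℕ, (∀ j, 1 ≤ x j) ∧ f x ≠ 0) ∧
    (∀ x : Fin m → ℕ, (∀ j, 1 ≤ x j) → planarH b m f x = E * f x)

lemma VW_update_castSucc {m : ℕ} (y : Fin (m+1) → ℕ) (i : Fin m) (k : ℕ) :
    (fun j : Fin m => Function.update y i.castSucc k j.castSucc)
      = Function.update (fun j => y j.castSucc) i k := by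
  funext j
  rcases eq_or_ne j i with h | h
  · subst h; simp
  · rw [Function.update_of_ne (fun hc => h (Fin.castSucc_injective _ hc)),
      Function.update_of_ne h]

lemma VW_key (b : ℝ) (m : ℕ) (w : ℕ → ℝ)
    (hw : ∀ n : ℕ, 1 ≤ n → (∑' k : ℕ, if 1 ≤ k then VWmat b n k * w k else 0) = 0)
    (f : (Fin m → ℕ) → ℝ) (E : ℝ)
    (hf : ∀ x : Fin m → ℕ, (∀ j, 1 ≤ x j) → planarH b m f x = E * f x)
    (y : Fin (m+1) → ℕ) (hy : ∀ j, 1 ≤ y j) :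
    planarH b (m+1) (fun z => f (fun j => z j.castSucc) * w (z (Fin.last m))) y
      = E * (f (fun j => y j.castSucc) * w (y (Fin.last m))) := by
  unfold planarH
  rw [Fin.sum_univ_castSucc]
  have h1 : ∀ i : Fin m,
      (∑' k : ℕ, if 1 ≤ k then VWmat b (y i.castSucc) k *
        (f (fun j => Function.update y i.castSucc k j.castSucc) *
          w (Function.update y i.castSucc k (Fin.last m))) else 0)
      = (∑' k : ℕ, if 1 ≤ k then VWmat b (y i.castSucc) k *
          f (Function.update (fun j => y j.castSucc) i k) else 0) * w (y (Fin.last m)) := by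
    intro i
    rw [← tsum_mul_right]
    apply tsum_congr; intro k
    rw [VW_update_castSucc, Function.update_of_ne (Fin.castSucc_lt_last i).ne']
    split <;> ring
  have h2 :
      (∑' k : ℕ, if 1 ≤ k then VWmat b (y (Fin.last m)) k *
        (f (fun j => Function.update y (Fin.last m) k j.castSucc) *
          w (Function.update y (Fin.last m) k (Fin.last m))) else 0)
      = f (fun j => y j.castSucc) *
        ∑' k : ℕ, if 1 ≤ k then VWmat b (y (Fin.last m)) k * w k else 0 := by
    rw [← tsum_mul_left]
    apply tsum_congr; intro k
    have hupd : (fun j : Fin m => Function.update y (Fin.last m) k j.castSucc)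
        = fun j => y j.castSucc := by
      funext j; rw [Function.update_of_ne (Fin.castSucc_lt_last j).ne]
    rw [hupd, Function.update_self]
    split <;> ring
  simp only [h1, h2]
  rw [hw (y (Fin.last m)) (hy (Fin.last m)), ← Finset.sum_mul]
  have := hf (fun j => y j.castSucc) (fun j => hy j.castSucc)
  unfold planarH at this
  rw [this]; ring

/-- Infinite degeneracy of the planar spectrum (paper, Sec. 2): if `w` is a zero mode
of the single-trace planar Hamiltonian (which exists for `b > 1`) and `f` is an
eigenfunction of `H^(m)` with eigenvalue `E`, then `g(n_1,…,n_{m+1}) = f(n_1,…,n_m) w(n_{m+1})`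
is a nonzero eigenfunction of `H^(m+1)` with the same eigenvalue `E`; consequently every
eigenvalue of `H^(m)` is an eigenvalue of `H^(m')` for all `m' ≥ m`. -/
theorem planar_eigenvalue_infinitely_degenerate (b : ℝ) (hb : 0 ≤ b) (m : ℕ) (hm : 1 ≤ m)
    (w : ℕ → ℝ) (hw0 : ∃ n : ℕ, 1 ≤ n ∧ w n ≠ 0)
    (hw : ∀ n : ℕ, 1 ≤ n → (∑' k : ℕ, if 1 ≤ k then VWmat b n k * w k else 0) = 0)
    (f : (Fin m → ℕ) → ℝ) (E : ℝ)
    (hf0 : ∃ x : Fin m → ℕ, (∀ j, 1 ≤ x j) ∧ f x ≠ 0)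
    (hf : ∀ x : Fin m → ℕ, (∀ j, 1 ≤ x j) → planarH b m f x = E * f x) :
    (∃ y : Fin (m + 1) → ℕ, (∀ j, 1 ≤ y j) ∧
        f (fun j => y j.castSucc) * w (y (Fin.last m)) ≠ 0) ∧
    (∀ y : Fin (m + 1) → ℕ, (∀ j, 1 ≤ y j) →
        planarH b (m + 1) (fun z => f (fun j => z j.castSucc) * w (z (Fin.last m))) y =
          E * (f (fun j => y j.castSucc) * w (y (Fin.last m)))) ∧
    (∀ m' : ℕ, m ≤ m' → IsPlanarEigenvalue b m' E) := by
  have key := VW_key b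
  have nonzero : ∀ (n : ℕ) (g : (Fin n → ℕ) → ℝ),
      (∃ x : Fin n → ℕ, (∀ j, 1 ≤ x j) ∧ g x ≠ 0) →
      ∃ y : Fin (n + 1) → ℕ, (∀ j, 1 ≤ y j) ∧
        g (fun j => y j.castSucc) * w (y (Fin.last n)) ≠ 0 := by
    intro n g ⟨x, hx, hgx⟩
    obtain ⟨c, hc, hwc⟩ := hw0
    refine ⟨Fin.snoc x c, ?_, ?_⟩
    · intro j
      refine Fin.lastCases ?_ (fun i => ?_) j
      · simpa using hc
      · simpa using hx i
    · have h1 : (fun j : Fin n => (Fin.snoc x c : Fin (n+1) → ℕ) j.castSucc) = x := by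
        funext j; simp
      rw [h1, Fin.snoc_last]
      exact mul_ne_zero hgx hwc
  refine ⟨nonzero m f hf0, fun y hy => key m w hw f E hf y hy, ?_⟩
  intro m' hm'
  induction m' , hm' using Nat.le_induction with
  | base => exact ⟨f, hf0, hf⟩
  | succ n hn ih =>
      obtain ⟨g, hg0, hg⟩ := ih
      exact ⟨fun z => g (fun j => z j.castSucc) * w (z (Fin.last n)),
        nonzero n g hg0, fun y hy => key n w hw g E hg y hy⟩
end

section
/- Let b ∈ ℝ, k ∈ ℕ, and let q be a real polynomial with deg q ≤ k and leading coefficient c = coeff_k(q). Define the polynomial r(X) = (1+b²) X q(X) − b² (X+1) q(X+1) − (X−1) q(X−1). Then deg r ≤ k (the potential degree-(k+1) terms cancel exactly), and the coefficient of X^k in r equals (1−b²)(k+1) c. -/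
open Polynomial

lemma coeff_comp_top (p : Polynomial ℝ) (n : ℕ) (h : p.natDegree ≤ n + 1) (a : ℝ) :
    (p.comp (X + C a)).coeff (n + 1) = p.coeff (n + 1) := by
  rw [← taylor_apply, taylor_coeff]
  have hd : ((hasseDeriv (n + 1)) p).natDegree < 1 := by
    have := natDegree_hasseDeriv_le p (n + 1)
    omega
  rw [eval_eq_sum_range' hd]
  simp [hasseDeriv_coeff]

lemma coeff_comp_next (p : Polynomial ℝ) (n : ℕ) (h : p.natDegree ≤ n + 1) (a : ℝ) :
    (p.comp (X + C a)).coeff n = p.coeff n + (n + 1) * a * p.coeff (n + 1) := by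
  rw [← taylor_apply, taylor_coeff]
  have hd : ((hasseDeriv n) p).natDegree < 2 := by
    have := natDegree_hasseDeriv_le p n
    omega
  rw [eval_eq_sum_range' hd]
  rw [Finset.sum_range_succ, Finset.sum_range_one]
  simp only [hasseDeriv_coeff, pow_zero, mul_one, pow_one]
  rw [Nat.add_comm 1 n, Nat.choose_succ_self_right]
  simp [Nat.choose_self]
  ring

/-- The Lemma of Appendix 1, in polynomial form: for `q` of degree `≤ k` with
leading coefficient `c = coeff_k q`, the polynomial
`r(X) = (1+b²) X q(X) − b² (X+1) q(X+1) − (X−1) q(X−1)` again has degree `≤ k`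
(the potential degree-`(k+1)` terms cancel), and its `X^k` coefficient equals
`(1−b²)(k+1) c`. This says that the operator `ℋ₀` leaves each space `𝒫^(k)` of
polynomial sequences of degree `≤ k` invariant and multiplies the leading
coefficient by `(1−b²)(k+1)`. -/
theorem H0_preserves_polynomial_degree (b : ℝ) (k : ℕ) (q : Polynomial ℝ)
    (hq : q.natDegree ≤ k) :
    (Polynomial.C (1 + b ^ 2) * Polynomial.X * q
        - Polynomial.C (b ^ 2) * (Polynomial.X + 1) * q.comp (Polynomial.X + 1)
        - (Polynomial.X - 1) * q.comp (Polynomial.X - 1)).natDegree ≤ k ∧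
    (Polynomial.C (1 + b ^ 2) * Polynomial.X * q
        - Polynomial.C (b ^ 2) * (Polynomial.X + 1) * q.comp (Polynomial.X + 1)
        - (Polynomial.X - 1) * q.comp (Polynomial.X - 1)).coeff k
      = (1 - b ^ 2) * (k + 1) * q.coeff k := by
  set p : Polynomial ℝ := X * q with hp
  have hpd : p.natDegree ≤ k + 1 := by
    calc p.natDegree ≤ X.natDegree + q.natDegree := natDegree_mul_le
    _ ≤ k + 1 := by simp [natDegree_X]; omega
  have e1 : (X + 1 : Polynomial ℝ) = X + C 1 := by simp
  have e2 : (X - 1 : Polynomial ℝ) = X + C (-1) := by simp [sub_eq_add_neg]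
  have h1 : (X + 1 : Polynomial ℝ) * q.comp (X + 1) = p.comp (X + C 1) := by
    rw [hp, mul_comp, X_comp, e1]
  have h2 : (X - 1 : Polynomial ℝ) * q.comp (X - 1) = p.comp (X + C (-1)) := by
    rw [hp, mul_comp, X_comp, e2]
  have hr : (Polynomial.C (1 + b ^ 2) * Polynomial.X * q
        - Polynomial.C (b ^ 2) * (Polynomial.X + 1) * q.comp (Polynomial.X + 1)
        - (Polynomial.X - 1) * q.comp (Polynomial.X - 1))
      = C (1 + b ^ 2) * p - C (b ^ 2) * p.comp (X + C 1) - p.comp (X + C (-1)) := by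
    rw [hp, ← h1, ← h2]; ring
  rw [hr]
  have hcomp : ∀ a : ℝ, (p.comp (X + C a)).natDegree ≤ k + 1 := by
    intro a
    calc (p.comp (X + C a)).natDegree ≤ p.natDegree * (X + C a).natDegree :=
      natDegree_comp_le
    _ ≤ k + 1 := by rw [natDegree_X_add_C]; omega
  have hqk1 : q.coeff (k + 1) = 0 := coeff_eq_zero_of_natDegree_lt (by omega)
  have hpk1 : p.coeff (k + 1) = q.coeff k := by rw [hp, coeff_X_mul]
  constructor
  · rw [natDegree_le_iff_coeff_eq_zero]
    intro N hN
    rcases Nat.lt_or_ge (k + 1) N with hN' | hN'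
    · simp only [coeff_sub, coeff_C_mul]
      rw [coeff_eq_zero_of_natDegree_lt (lt_of_le_of_lt hpd hN'),
        coeff_eq_zero_of_natDegree_lt (lt_of_le_of_lt (hcomp 1) hN'),
        coeff_eq_zero_of_natDegree_lt (lt_of_le_of_lt (hcomp (-1)) hN')]
      ring
    · have : N = k + 1 := by omega
      subst this
      simp only [coeff_sub, coeff_C_mul,
        coeff_comp_top p k hpd 1, coeff_comp_top p k hpd (-1)]
      ring
  · simp only [coeff_sub, coeff_C_mul,
      coeff_comp_next p k hpd 1, coeff_comp_next p k hpd (-1), hpk1]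
    ring
end

section
/- Let b ∈ ℝ and k ∈ ℕ, and define M_k : ℕ → ℝ by the terminating hypergeometric sum M_k(n) = ₂F₁(−k, n+1; 2; 1−b²) = Σ_{s=0}^{k} (−1)^s C(k,s) · ((n+1)(n+2)⋯(n+s) / (s+1)!) · (1−b²)^s. Then for every n ≥ 1: (1+b²) n M_k(n) − b²(n+1) M_k(n+1) − (n−1) M_k(n−1) = (1−b²)(k+1) M_k(n). That is, M_k is an eigenvector of the operator ℋ₀ with eigenvalue (1−b²)(k+1). -/
lemma prod_shift (a : ℝ) (r : ℕ) :
    ∏ t ∈ Finset.Icc 1 (r + 1), (a + t) = (a + 1) * ∏ t ∈ Finset.Icc 1 r, (a + 1 + t) := by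
  induction r with
  | zero => simp
  | succ r ih =>
      rw [Finset.prod_Icc_succ_top (by omega), ih,
        Finset.prod_Icc_succ_top (Nat.one_le_iff_ne_zero.mpr (by omega))]
      push_cast
      ring



/-- The Meixner polynomial (up to normalization): the terminating hypergeometric sum
`M_k(n) = ₂F₁(−k, n+1; 2; 1−b²)
       = Σ_{s=0}^{k} (−1)^s C(k,s) ((n+1)(n+2)⋯(n+s)/(s+1)!) (1−b²)^s`. -/
noncomputable def meixner (b : ℝ) (k n : ℕ) : ℝ :=
  ∑ s ∈ Finset.range (k + 1),
    (-1) ^ s * (k.choose s : ℝ) * ((∏ t ∈ Finset.Icc 1 s, ((n : ℝ) + t)) /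
      ((s + 1).factorial : ℝ)) * (1 - b ^ 2) ^ s

/-- Appendix 1: `M_k` is an eigenvector of the three-term recurrence operator
`(ℋ₀φ)_n = (1+b²) n φ_n − b²(n+1) φ_{n+1} − (n−1) φ_{n−1}` with eigenvalue
`(1−b²)(k+1)`: for every `n ≥ 1`,
`(1+b²) n M_k(n) − b²(n+1) M_k(n+1) − (n−1) M_k(n−1) = (1−b²)(k+1) M_k(n)`. -/
theorem meixner_eigenvector (b : ℝ) (k : ℕ) :
    ∀ n : ℕ, 1 ≤ n →
      (1 + b ^ 2) * n * meixner b k n - b ^ 2 * (n + 1) * meixner b k (n + 1)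
          - ((n : ℝ) - 1) * meixner b k (n - 1)
        = (1 - b ^ 2) * (k + 1) * meixner b k n := by
  intro n hn
  obtain ⟨m, rfl⟩ : ∃ m, n = m + 1 := ⟨n - 1, by omega⟩
  have hf : ∀ nn : ℕ, meixner b k nn = ∑ s ∈ Finset.range (k + 1),
      (-1) ^ s * (k.choose s : ℝ) * ((∏ t ∈ Finset.Icc 1 s, ((nn : ℝ) + t)) /
        ((s + 1).factorial : ℝ)) * (1 - b ^ 2) ^ s := fun _ => rfl
  set G : ℕ → ℝ := fun s => (-1) ^ s * (k.choose s : ℝ) * s * (s + 1) *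
      (∏ t ∈ Finset.Icc 1 (s - 1), ((m : ℝ) + 1 + t)) / ((s + 1).factorial : ℝ) *
      (1 - b ^ 2) ^ s with hG
  have key : ∀ s ∈ Finset.range (k + 1),
      (1 + b ^ 2) * ((m : ℝ) + 1) *
          ((-1) ^ s * (k.choose s : ℝ) * ((∏ t ∈ Finset.Icc 1 s, ((m : ℝ) + 1 + t)) /
            ((s + 1).factorial : ℝ)) * (1 - b ^ 2) ^ s)
        - b ^ 2 * ((m : ℝ) + 1 + 1) *
          ((-1) ^ s * (k.choose s : ℝ) * ((∏ t ∈ Finset.Icc 1 s, ((m : ℝ) + 1 + 1 + t)) /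
            ((s + 1).factorial : ℝ)) * (1 - b ^ 2) ^ s)
        - ((m : ℝ) + 1 - 1) *
          ((-1) ^ s * (k.choose s : ℝ) * ((∏ t ∈ Finset.Icc 1 s, ((m : ℝ) + t)) /
            ((s + 1).factorial : ℝ)) * (1 - b ^ 2) ^ s)
        - (1 - b ^ 2) * ((k : ℝ) + 1) *
          ((-1) ^ s * (k.choose s : ℝ) * ((∏ t ∈ Finset.Icc 1 s, ((m : ℝ) + 1 + t)) /
            ((s + 1).factorial : ℝ)) * (1 - b ^ 2) ^ s)
        = G (s + 1) - G s := by
    intro s hs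
    match s with
    | 0 =>
        simp only [hG]
        norm_num [Nat.choose_one_right, Nat.factorial]
        ring
    | r + 1 =>
        have hrk : r + 1 ≤ k := by simpa using Nat.lt_succ_iff.mp (Finset.mem_range.mp hs)
        set Q : ℝ := ∏ t ∈ Finset.Icc 1 r, ((m : ℝ) + 1 + t) with hQ
        have hm2 : ((m : ℝ) + 2) ≠ 0 := by positivity
        have hA : ∏ t ∈ Finset.Icc 1 (r + 1), ((m : ℝ) + 1 + t)
            = Q * ((m : ℝ) + r + 2) := by
          rw [Finset.prod_Icc_succ_top (by omega)]
          push_cast; ring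
        have hB : ∏ t ∈ Finset.Icc 1 (r + 1), ((m : ℝ) + t) = ((m : ℝ) + 1) * Q := by
          rw [prod_shift]
        have hC0 : ∏ t ∈ Finset.Icc 1 (r + 1), ((m : ℝ) + 1 + t)
            = ((m : ℝ) + 1 + 1) * ∏ t ∈ Finset.Icc 1 r, ((m : ℝ) + 1 + 1 + t) :=
          prod_shift _ r
        have h2 : ((m : ℝ) + 1 + 1) * ∏ t ∈ Finset.Icc 1 r, ((m : ℝ) + 1 + 1 + t)
            = Q * ((m : ℝ) + r + 2) := by rw [← hC0, hA]
        have hC : ∏ t ∈ Finset.Icc 1 (r + 1), ((m : ℝ) + 1 + 1 + t)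
            = Q * (((m : ℝ) + r + 2) * ((m : ℝ) + r + 3)) / ((m : ℝ) + 2) := by
          rw [Finset.prod_Icc_succ_top (by omega)]
          have h1 : ∏ t ∈ Finset.Icc 1 r, ((m : ℝ) + 1 + 1 + t)
              = Q * ((m : ℝ) + r + 2) / ((m : ℝ) + 2) := by
            rw [eq_div_iff hm2]
            linear_combination h2
          rw [h1]; push_cast; ring
        have hch : (k.choose (r + 2) : ℝ) * ((r : ℝ) + 2)
            = (k.choose (r + 1) : ℝ) * ((k : ℝ) - ((r : ℝ) + 1)) := by
          have := Nat.choose_succ_right_eq k (r + 1)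
          have hcast : ((k - (r + 1) : ℕ) : ℝ) = (k : ℝ) - ((r : ℝ) + 1) := by
            push_cast [Nat.cast_sub hrk]; ring
          calc (k.choose (r + 2) : ℝ) * ((r : ℝ) + 2)
              = ((k.choose (r + 1 + 1) * (r + 1 + 1) : ℕ) : ℝ) := by push_cast; ring
            _ = ((k.choose (r + 1) * (k - (r + 1)) : ℕ) : ℝ) := by rw [this]
            _ = (k.choose (r + 1) : ℝ) * ((k : ℝ) - ((r : ℝ) + 1)) := by
                push_cast [Nat.cast_sub hrk]; ring
        have hF : ((r + 2).factorial : ℝ) ≠ 0 := by positivity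
        have hfac : ((r + 1 + 1 + 1).factorial : ℝ) = ((r : ℝ) + 3) * ((r + 2).factorial : ℝ) := by
          rw [show r + 1 + 1 + 1 = (r + 2) + 1 from rfl, Nat.factorial_succ]
          push_cast; ring
        simp only [hG, hA, hB, hC, hfac, Nat.add_sub_cancel]
        have e1 : (r + 1 + 1 : ℕ) = r + 2 := rfl
        rw [e1]
        have hchoose2 : (k.choose (r + 2) : ℝ)
            = (k.choose (r + 1) : ℝ) * ((k : ℝ) - ((r : ℝ) + 1)) / ((r : ℝ) + 2) := by
          field_simp
          linarith [hch]
        rw [hchoose2]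
        push_cast
        field_simp
        ring
  rw [← sub_eq_zero, show m + 1 - 1 = m from rfl, hf, hf, hf]
  push_cast
  rw [Finset.mul_sum, Finset.mul_sum, Finset.mul_sum, Finset.mul_sum,
    ← Finset.sum_sub_distrib, ← Finset.sum_sub_distrib, ← Finset.sum_sub_distrib,
    Finset.sum_congr rfl key, Finset.sum_range_sub G (k + 1)]
  simp [hG, Nat.choose_succ_self]
end

section
/- Let 0 < b < 1 and for k ∈ ℕ define φ^(k) : ℤ≥1 → ℝ by φ^(k)_n = (1−b²) √((k+1)/b^{2(k+1)}) · M_k(n), where M_k(n) = Σ_{s=0}^{k} (−1)^s C(k,s) ((n+1)(n+2)⋯(n+s)/(s+1)!) (1−b²)^s. Then for all k, h ∈ ℕ the series Σ_{n=1}^∞ n b^{2n} φ^(k)_n φ^(h)_n converges and equals δ_{kh}. -/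
/-- The normalized Meixner eigenvectors of Appendix 1:
`φ^(k)_n = (1−b²) √((k+1)/b^{2(k+1)}) M_k(n)`. -/
noncomputable def meixnerNorm (b : ℝ) (k n : ℕ) : ℝ :=
  (1 - b ^ 2) * Real.sqrt ((k + 1) / b ^ (2 * (k + 1))) * meixner b k n

open Finset fwdDiff

lemma fwdDiff_iter_choose_eq_zero {i k : ℕ} (h : i < k) :
    (Δ_[1])^[k] (fun x ↦ x.choose i : ℕ → ℤ) = 0 := by
  obtain ⟨l, rfl⟩ := Nat.exists_eq_add_of_lt h
  rw [show i + l + 1 = l + 1 + i by ring, Function.iterate_add_apply,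
    show (fun x ↦ x.choose i : ℕ → ℤ) = fun x ↦ x.choose (i + 0) from rfl, fwdDiff_iter_choose,
    Function.iterate_succ_apply]
  simp only [Nat.choose_zero_right, Nat.cast_one, fwdDiff_const]
  exact Function.iterate_fixed (fwdDiff_const 1 (0 : ℤ)) l

lemma sum_range_neg_one_pow_mul_choose_mul (f : ℕ → ℤ) (k : ℕ) :
    ∑ s ∈ range (k + 1), (-1) ^ s * (k.choose s : ℤ) * f s = (-1) ^ k * (Δ_[1])^[k] f 0 := by
  rw [fwdDiff_iter_eq_sum_shift, mul_sum]
  refine sum_congr rfl fun s hs ↦ ?_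
  obtain ⟨t, rfl⟩ := Nat.exists_eq_add_of_le (mem_range_succ_iff.mp hs)
  have hsq : (-1 : ℤ) ^ t * (-1) ^ t = 1 := by rw [← pow_add, Even.neg_one_pow ⟨t, rfl⟩]
  simp only [zero_add, smul_eq_mul, mul_one, Nat.add_sub_cancel_left, pow_add]
  linear_combination (-(-1) ^ s * ((s + t).choose s : ℤ) * f s) * hsq

lemma sum_range_neg_one_pow_mul_choose_mul_choose_add_of_lt (c : ℕ) {i k : ℕ} (h : i < k) :
    ∑ s ∈ range (k + 1), (-1) ^ s * (k.choose s : ℤ) * ((s + c).choose i : ℤ) = 0 := by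
  rw [sum_range_neg_one_pow_mul_choose_mul (fun s ↦ ((s + c).choose i : ℤ)),
    fwdDiff_iter_comp_add 1 (fun x ↦ (x.choose i : ℤ)) c k 0, fwdDiff_iter_choose_eq_zero h]
  simp

lemma sum_range_neg_one_pow_mul_choose_mul_choose_add_self (c k : ℕ) :
    ∑ s ∈ range (k + 1), (-1) ^ s * (k.choose s : ℤ) * ((s + c).choose k : ℤ) = (-1) ^ k := by
  rw [sum_range_neg_one_pow_mul_choose_mul (fun s ↦ ((s + c).choose k : ℤ)),
    fwdDiff_iter_comp_add 1 (fun x ↦ (x.choose k : ℤ)) c k 0]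
  simpa using congrFun (fwdDiff_iter_choose 0 k) c

lemma prod_Icc_natCast_add_eq_factorial_mul_choose (n s : ℕ) :
    ∏ t ∈ Icc 1 s, ((n : ℝ) + t) = s.factorial * (n + s).choose s := by
  induction s with
  | zero => simp
  | succ s ih =>
    rw [prod_Icc_succ_top (by omega), ih, ← add_assoc]
    have h : ((n + s : ℕ) + 1 : ℝ) * (n + s).choose s = (n + s + 1).choose (s + 1) * (s + 1) := by
      exact_mod_cast Nat.add_one_mul_choose_eq (n + s) s
    push_cast [Nat.factorial_succ] at h ⊢
    linear_combination (s.factorial : ℝ) * h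

lemma meixner_eq_sum_choose (b : ℝ) (k n : ℕ) :
    meixner b k n = ∑ s ∈ range (k + 1),
      (-1) ^ s * (k.choose s : ℝ) * (1 - b ^ 2) ^ s * ((n + s).choose s / (s + 1)) := by
  refine sum_congr rfl fun s _ ↦ ?_
  rw [prod_Icc_natCast_add_eq_factorial_mul_choose, Nat.factorial_succ]
  push_cast
  field_simp

lemma natCast_mul_meixner_eq_sum_choose (b : ℝ) (k n : ℕ) :
    n * meixner b k n = ∑ s ∈ range (k + 1),
      (-1) ^ s * (k.choose s : ℝ) * (1 - b ^ 2) ^ s * (n + s).choose (s + 1) := by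
  rw [meixner_eq_sum_choose, mul_sum]
  refine sum_congr rfl fun s _ ↦ ?_
  have h := Nat.choose_succ_right_eq (n + s) s
  rw [Nat.add_sub_cancel] at h
  have h' : ((n + s).choose (s + 1) : ℝ) = (n + s).choose s * n / (s + 1) :=
    eq_div_of_mul_eq (by positivity) (by exact_mod_cast h)
  rw [h']
  ring

lemma choose_succ_add_mul_choose (m s j : ℕ) :
    (m + 1 + s).choose (s + 1) * m.choose j =
      (s + (j + 1)).choose j * (m + (s + 1)).choose (s + 1 + j) := by
  have h := Nat.choose_mul (n := m + 1 + s) (k := s + 1 + j) (s := s + 1) (by omega)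
  rw [show m + 1 + s - (s + 1) = m by omega, Nat.add_sub_cancel_left,
    Nat.choose_symm_add, show s + 1 + j = s + (j + 1) by ring] at h
  rw [← h, show m + (s + 1) = m + 1 + s by ring, show s + 1 + j = s + (j + 1) by ring, mul_comm]

lemma hasSum_choose_add_mul_geometric {𝕜 : Type*} [NormedField 𝕜] {q : 𝕜} (hq : ‖q‖ < 1)
    (d j : ℕ) :
    HasSum (fun m ↦ ((m + d).choose (d + j) : 𝕜) * q ^ m) (q ^ j / (1 - q) ^ (d + j + 1)) := by
  have hvanish : ∑ m ∈ range j, ((m + d).choose (d + j) : 𝕜) * q ^ m = 0 :=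
    sum_eq_zero fun m hm ↦ by
      rw [Nat.choose_eq_zero_of_lt (by simp at hm; omega), Nat.cast_zero, zero_mul]
  have hshift : ∀ m, ((m + j + d).choose (d + j) : 𝕜) * q ^ (m + j) =
      q ^ j * ((m + (d + j)).choose (d + j) * q ^ m) := fun m ↦ by
    rw [add_assoc, add_comm j d, pow_add]
    ring
  rw [← hasSum_nat_add_iff' j, hvanish, sub_zero]
  simp only [hshift, ← mul_one_div (q ^ j)]
  exact (hasSum_choose_mul_geometric_of_norm_lt_one (d + j) hq).mul_left (q ^ j)

lemma succ_add_choose_eq_sum (m s : ℕ) :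
    (m + 1 + s).choose s = ∑ j ∈ range (s + 1), (s + 1).choose (j + 1) * m.choose j := by
  rw [show m + 1 + s = m + (s + 1) by ring, Nat.add_choose_eq,
    Nat.sum_antidiagonal_eq_sum_range_succ_mk]
  refine sum_congr rfl fun j hj ↦ ?_
  rw [mul_comm, Nat.choose_symm_of_eq_add]
  simp at hj
  omega

variable {b : ℝ}

/- Series are indexed by `m = n - 1`, so that the basis polynomial `C(n - 1, j)` is `m.choose j`
without truncated subtraction. -/
lemma hasSum_mul_meixner_mul_choose (hb : b ^ 2 < 1) (k j : ℕ) :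
    HasSum (fun m : ℕ ↦ ((m : ℝ) + 1) * (b ^ 2) ^ (m + 1) * meixner b k (m + 1) * m.choose j)
      ((b ^ 2) ^ (j + 1) / (1 - b ^ 2) ^ (j + 2) *
        ∑ s ∈ range (k + 1), (-1) ^ s * (k.choose s : ℝ) * (s + (j + 1)).choose j) := by
  have hq : ‖b ^ 2‖ < 1 := by rwa [Real.norm_of_nonneg (sq_nonneg b)]
  have hx : 1 - b ^ 2 ≠ 0 := by linarith
  set c : ℕ → ℝ := fun s ↦ (-1) ^ s * (k.choose s : ℝ) * (1 - b ^ 2) ^ s *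
    (s + (j + 1)).choose j * b ^ 2
  have hterm : ∀ m : ℕ, ((m : ℝ) + 1) * (b ^ 2) ^ (m + 1) * meixner b k (m + 1) * m.choose j
      = ∑ s ∈ range (k + 1), c s * (((m + (s + 1)).choose (s + 1 + j) : ℝ) * (b ^ 2) ^ m) := by
    intro m
    have h := natCast_mul_meixner_eq_sum_choose b k (m + 1)
    push_cast at h
    rw [mul_right_comm _ _ (meixner b k (m + 1)), h, sum_mul, sum_mul]
    refine sum_congr rfl fun s _ ↦ ?_
    have hchoose : ((m + 1 + s).choose (s + 1) : ℝ) * m.choose j =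
        (s + (j + 1)).choose j * (m + (s + 1)).choose (s + 1 + j) := by
      exact_mod_cast choose_succ_add_mul_choose m s j
    rw [pow_succ]
    linear_combination (-1) ^ s * (k.choose s : ℝ) * (1 - b ^ 2) ^ s * (b ^ 2) ^ m * b ^ 2 * hchoose
  have hval : ∑ s ∈ range (k + 1), c s * ((b ^ 2) ^ j / (1 - b ^ 2) ^ (s + 1 + j + 1)) =
      (b ^ 2) ^ (j + 1) / (1 - b ^ 2) ^ (j + 2) *
        ∑ s ∈ range (k + 1), (-1) ^ s * (k.choose s : ℝ) * (s + (j + 1)).choose j := by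
    rw [mul_sum]
    refine sum_congr rfl fun s _ ↦ ?_
    rw [show s + 1 + j + 1 = s + (j + 2) by ring, pow_add]
    field_simp
    ring
  rw [funext hterm, ← hval]
  exact hasSum_sum fun s _ ↦ (hasSum_choose_add_mul_geometric hq (s + 1) j).mul_left (c s)

lemma hasSum_mul_meixner_mul_choose_add (hb : b ^ 2 < 1) (k s : ℕ) :
    HasSum (fun m : ℕ ↦ ((m : ℝ) + 1) * (b ^ 2) ^ (m + 1) * meixner b k (m + 1) *
        (m + 1 + s).choose s)
      (∑ j ∈ range (s + 1), ((s + 1).choose (j + 1) : ℝ) *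
        ((b ^ 2) ^ (j + 1) / (1 - b ^ 2) ^ (j + 2) *
          ∑ t ∈ range (k + 1), (-1) ^ t * (k.choose t : ℝ) * (t + (j + 1)).choose j)) := by
  have hterm : ∀ m : ℕ, ((m : ℝ) + 1) * (b ^ 2) ^ (m + 1) * meixner b k (m + 1) *
      (m + 1 + s).choose s = ∑ j ∈ range (s + 1), ((s + 1).choose (j + 1) : ℝ) *
        (((m : ℝ) + 1) * (b ^ 2) ^ (m + 1) * meixner b k (m + 1) * m.choose j) := fun m ↦ by
    rw [succ_add_choose_eq_sum]
    push_cast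
    rw [mul_sum]
    exact sum_congr rfl fun j _ ↦ by ring
  rw [funext hterm]
  exact hasSum_sum fun j _ ↦ (hasSum_mul_meixner_mul_choose hb k j).mul_left _

lemma hasSum_mul_meixner_mul_choose_add_of_lt (hb : b ^ 2 < 1) {k s : ℕ} (hs : s < k) :
    HasSum (fun m : ℕ ↦ ((m : ℝ) + 1) * (b ^ 2) ^ (m + 1) * meixner b k (m + 1) *
        (m + 1 + s).choose s) 0 := by
  convert hasSum_mul_meixner_mul_choose_add hb k s using 1
  refine (sum_eq_zero fun j hj ↦ ?_).symm
  have halt : ∑ t ∈ range (k + 1), (-1) ^ t * (k.choose t : ℝ) * (t + (j + 1)).choose j = 0 := by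
    exact_mod_cast sum_range_neg_one_pow_mul_choose_mul_choose_add_of_lt (j + 1)
      (by simp at hj; omega)
  rw [halt, mul_zero, mul_zero]

lemma hasSum_mul_meixner_mul_choose_add_self (hb : b ^ 2 < 1) (k : ℕ) :
    HasSum (fun m : ℕ ↦ ((m : ℝ) + 1) * (b ^ 2) ^ (m + 1) * meixner b k (m + 1) *
        (m + 1 + k).choose k)
      ((-1) ^ k * (b ^ 2) ^ (k + 1) / (1 - b ^ 2) ^ (k + 2)) := by
  convert hasSum_mul_meixner_mul_choose_add hb k k using 1
  rw [sum_range_succ, sum_eq_zero fun j hj ↦ ?_]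
  · have halt : ∑ t ∈ range (k + 1), (-1) ^ t * (k.choose t : ℝ) * (t + (k + 1)).choose k =
        (-1) ^ k := by
      exact_mod_cast sum_range_neg_one_pow_mul_choose_mul_choose_add_self (k + 1) k
    rw [halt, Nat.choose_self]
    ring
  · have halt : ∑ t ∈ range (k + 1), (-1) ^ t * (k.choose t : ℝ) * (t + (j + 1)).choose j = 0 := by
      exact_mod_cast sum_range_neg_one_pow_mul_choose_mul_choose_add_of_lt (j + 1)
        (by simpa using hj)
    rw [halt, mul_zero, mul_zero]

lemma hasSum_mul_meixner_of_hasSum_mul_choose {f ν : ℕ → ℝ} (h : ℕ)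
    (hν : ∀ s ∈ range (h + 1), HasSum (fun m ↦ f m * (m + 1 + s).choose s) (ν s)) :
    HasSum (fun m ↦ f m * meixner b h (m + 1))
      (∑ s ∈ range (h + 1), (-1) ^ s * (h.choose s : ℝ) * (1 - b ^ 2) ^ s / (s + 1) * ν s) := by
  have hterm : ∀ m, f m * meixner b h (m + 1) = ∑ s ∈ range (h + 1),
      (-1) ^ s * (h.choose s : ℝ) * (1 - b ^ 2) ^ s / (s + 1) * (f m * (m + 1 + s).choose s) :=
    fun m ↦ by
      rw [meixner_eq_sum_choose, mul_sum]
      exact sum_congr rfl fun s _ ↦ by ring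
  rw [funext hterm]
  exact hasSum_sum fun s hs ↦ (hν s hs).mul_left _

lemma hasSum_mul_meixner_mul_meixner_of_lt (hb : b ^ 2 < 1) {k h : ℕ} (hhk : h < k) :
    HasSum (fun m : ℕ ↦ ((m : ℝ) + 1) * (b ^ 2) ^ (m + 1) * meixner b k (m + 1) *
      meixner b h (m + 1)) 0 := by
  simpa using hasSum_mul_meixner_of_hasSum_mul_choose h fun s hs ↦
    hasSum_mul_meixner_mul_choose_add_of_lt hb (k := k) (by simp at hs; omega)

lemma hasSum_mul_meixner_mul_meixner_self (hb : b ^ 2 < 1) (k : ℕ) :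
    HasSum (fun m : ℕ ↦ ((m : ℝ) + 1) * (b ^ 2) ^ (m + 1) * meixner b k (m + 1) *
      meixner b k (m + 1)) ((b ^ 2) ^ (k + 1) / ((k + 1) * (1 - b ^ 2) ^ 2)) := by
  have hx : 1 - b ^ 2 ≠ 0 := by linarith
  have hν : ∀ s ∈ range (k + 1), HasSum (fun m : ℕ ↦ ((m : ℝ) + 1) * (b ^ 2) ^ (m + 1) *
      meixner b k (m + 1) * (m + 1 + s).choose s)
        (if s = k then (-1) ^ k * (b ^ 2) ^ (k + 1) / (1 - b ^ 2) ^ (k + 2) else 0) := by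
    intro s hs
    split_ifs with hsk
    · exact hsk ▸ hasSum_mul_meixner_mul_choose_add_self hb k
    · exact hasSum_mul_meixner_mul_choose_add_of_lt hb (by simp at hs; omega)
  convert hasSum_mul_meixner_of_hasSum_mul_choose k hν using 1
  simp only [mul_ite, mul_zero, sum_ite_eq', mem_range, lt_add_one, if_true, Nat.choose_self]
  have hsign : ((-1 : ℝ) ^ k) ^ 2 = 1 := by rw [← pow_mul, pow_mul', neg_one_sq, one_pow]
  rw [pow_add (1 - b ^ 2) k 2]
  field_simp
  simp [hsign]

lemma hasSum_mul_meixner_mul_meixner (hb : b ^ 2 < 1) (k h : ℕ) :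
    HasSum (fun m : ℕ ↦ ((m : ℝ) + 1) * (b ^ 2) ^ (m + 1) * meixner b k (m + 1) *
      meixner b h (m + 1))
      (if k = h then (b ^ 2) ^ (k + 1) / ((k + 1) * (1 - b ^ 2) ^ 2) else 0) := by
  rcases lt_trichotomy k h with hkh | rfl | hhk
  · rw [if_neg hkh.ne]
    simpa only [mul_right_comm _ (meixner b h _)] using hasSum_mul_meixner_mul_meixner_of_lt hb hkh
  · simpa using hasSum_mul_meixner_mul_meixner_self hb k
  · rw [if_neg hhk.ne']
    exact hasSum_mul_meixner_mul_meixner_of_lt hb hhk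

lemma one_sub_sq_mul_sqrt_sq_mul (hb0 : b ≠ 0) (hb : b ^ 2 < 1) (k : ℕ) :
    ((1 - b ^ 2) * √((k + 1) / b ^ (2 * (k + 1)))) ^ 2 *
      ((b ^ 2) ^ (k + 1) / ((k + 1) * (1 - b ^ 2) ^ 2)) = 1 := by
  have hx : 1 - b ^ 2 ≠ 0 := by linarith
  rw [mul_pow, pow_mul, Real.sq_sqrt (by positivity)]
  field_simp

lemma hasSum_mul_meixnerNorm_mul_meixnerNorm (hb0 : b ≠ 0) (hb : b ^ 2 < 1) (k h : ℕ) :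
    HasSum (fun m : ℕ ↦ ((m + 1 : ℕ) : ℝ) * b ^ (2 * (m + 1)) * meixnerNorm b k (m + 1) *
      meixnerNorm b h (m + 1)) (if k = h then 1 else 0) := by
  set c : ℕ → ℝ := fun i ↦ (1 - b ^ 2) * √((i + 1) / b ^ (2 * (i + 1))) with hc
  have hterm : ∀ m : ℕ, ((m + 1 : ℕ) : ℝ) * b ^ (2 * (m + 1)) * meixnerNorm b k (m + 1) *
      meixnerNorm b h (m + 1) = c k * c h *
      (((m : ℝ) + 1) * (b ^ 2) ^ (m + 1) * meixner b k (m + 1) * meixner b h (m + 1)) := by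
    intro m
    rw [pow_mul, meixnerNorm, meixnerNorm]
    push_cast
    ring
  have hval : c k * c h * (if k = h then (b ^ 2) ^ (k + 1) / ((k + 1) * (1 - b ^ 2) ^ 2) else 0) =
      if k = h then 1 else 0 := by
    split_ifs with hkh
    · subst hkh
      simp only [hc]
      linear_combination one_sub_sq_mul_sqrt_sq_mul hb0 hb k
    · rw [mul_zero]
  rw [funext hterm, ← hval]
  exact (hasSum_mul_meixner_mul_meixner hb k h).mul_left (c k * c h)

/-- Orthonormality of the Meixner polynomials (Appendix 1): for `0 < b < 1` the
series `Σ_{n=1}^∞ n b^{2n} φ^(k)_n φ^(h)_n` converges and equals `δ_{kh}`. -/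
theorem meixner_orthonormal (b : ℝ) (hb0 : 0 < b) (hb1 : b < 1) (k h : ℕ) :
    Summable (fun n : ℕ => if 1 ≤ n then
        (n : ℝ) * b ^ (2 * n) * meixnerNorm b k n * meixnerNorm b h n else 0) ∧
    (∑' n : ℕ, if 1 ≤ n then
        (n : ℝ) * b ^ (2 * n) * meixnerNorm b k n * meixnerNorm b h n else 0)
      = if k = h then 1 else 0 := by
  suffices hsum : HasSum (fun n : ℕ => if 1 ≤ n then
      (n : ℝ) * b ^ (2 * n) * meixnerNorm b k n * meixnerNorm b h n else 0) (if k = h then 1 else 0)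
    from ⟨hsum.summable, hsum.tsum_eq⟩
  rw [← hasSum_nat_add_iff' 1, sum_range_one, if_neg (by decide : ¬ 1 ≤ 0), sub_zero]
  simpa using hasSum_mul_meixnerNorm_mul_meixnerNorm hb0.ne' (by nlinarith) k h
end

section
/- Let 0 < b < 1 and k ∈ ℕ. Define ψ^(k) : ℤ≥1 → ℝ by ψ^(k)_n = (−1)^n b^n √n · (1−b²) √((k+1)/b^{2(k+1)}) · M_k(n), with M_k(n) = Σ_{s=0}^{k} (−1)^s C(k,s) ((n+1)(n+2)⋯(n+s)/(s+1)!) (1−b²)^s. Then ψ^(k) belongs to ℓ²(ℤ≥1) with ‖ψ^(k)‖ = 1, and it satisfies, for every n ≥ 1 (with ψ^(k)_0 := 0), (1+b²) n ψ^(k)_n + b √((n−1)n) ψ^(k)_{n−1} + b √(n(n+1)) ψ^(k)_{n+1} = (1−b²)(k+1) ψ^(k)_n. Hence the tridiagonal matrix ℋ₀ has, for each n ≥ 1, the eigenvalue (1−b²) n = |1−b²| n with a normalized ℓ² eigenvector. -/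
/-- The normalized eigenvectors of the symmetric tridiagonal matrix `ℋ₀` of Appendix 1:
`ψ^(k)_n = (−1)^n b^n √n (1−b²) √((k+1)/b^{2(k+1)}) M_k(n)` (in particular `ψ^(k)_0 = 0`). -/
noncomputable def meixnerPsi (b : ℝ) (k n : ℕ) : ℝ :=
  (-1) ^ n * b ^ n * Real.sqrt n *
    ((1 - b ^ 2) * Real.sqrt ((k + 1) / b ^ (2 * (k + 1))) * meixner b k n)

/-!
Write `q = b²`. After the substitution `ψₙ = (-1)ⁿ bⁿ √n · M(n)`, the eigenvalue equation for
`ℋ₀` becomes the difference equation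
`(1+q) x M(x) - (x-1) M(x-1) - q (x+1) M(x+1) = (1-q)(k+1) M(x)`,
a contiguous relation of `₂F₁(-k, x+1; 2; 1-q)` which holds coefficientwise in `1 - q`. The
difference operator on the left is symmetric for the weight `n qⁿ` on `ℕ`, so the `M_k` are
orthogonal for that weight. Pairing the three-term recurrence in `k` at levels `k` and `k + 1`
with `M_{k+1}` and `M_k` gives `(k+2) ‖M_{k+1}‖² = (k+1) q ‖M_k‖²`; with
`‖M_0‖² = ∑ n qⁿ = q/(1-q)²` this yields `‖M_k‖² = q^(k+1) / ((k+1)(1-q)²)`, which is exactly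
the normalization in `ψ^(k)`.
-/

open Polynomial Finset
open scoped Nat

theorem summable_eval_mul_geometric {𝕜 : Type*} [NormedField 𝕜] [CompleteSpace 𝕜] {q : 𝕜}
    (hq : ‖q‖ < 1) (p : 𝕜[X]) : Summable fun n : ℕ => p.eval (n : 𝕜) * q ^ n := by
  simp_rw [eval_eq_sum_range, sum_mul]
  refine summable_sum fun i _ => ?_
  simpa only [mul_assoc] using
    (summable_pow_mul_geometric_of_norm_lt_one i hq).mul_left (p.coeff i)

theorem summable_weightedForm_term {q : ℝ} (hq : |q| < 1) (p r : ℝ[X]) :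
    Summable fun n : ℕ => (n : ℝ) * q ^ n * p.eval (n : ℝ) * r.eval (n : ℝ) :=
  (summable_eval_mul_geometric (by simpa using hq) (X * p * r)).congr fun n => by
    simp only [eval_mul, eval_X]; ring

-- For `ψₙ = (-1)ⁿ bⁿ √n f(n)` one has `(ℋ₀ ψ)ₙ = (-1)ⁿ bⁿ √n (jacobiOp (b²) f)(n)`.
noncomputable def jacobiOp (q : ℝ) (p : ℝ[X]) : ℝ[X] :=
  (1 + q) • (X * p) - (X - 1) * p.comp (X - 1) - q • ((X + 1) * p.comp (X + 1))

section WeightedForm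

variable {q : ℝ} (hq : |q| < 1)

noncomputable def weightedForm : LinearMap.BilinForm ℝ ℝ[X] :=
  LinearMap.mk₂ ℝ (fun p r => ∑' n : ℕ, (n : ℝ) * q ^ n * p.eval (n : ℝ) * r.eval (n : ℝ))
    (fun p₁ p₂ r => by
      rw [← (summable_weightedForm_term hq p₁ r).tsum_add
        (summable_weightedForm_term hq p₂ r)]
      exact tsum_congr fun n => by simp only [eval_add]; ring)
    (fun a p r => by
      rw [smul_eq_mul, ← tsum_mul_left]
      exact tsum_congr fun n => by simp only [eval_smul, smul_eq_mul]; ring)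
    (fun p r₁ r₂ => by
      rw [← (summable_weightedForm_term hq p r₁).tsum_add
        (summable_weightedForm_term hq p r₂)]
      exact tsum_congr fun n => by simp only [eval_add]; ring)
    (fun a p r => by
      rw [smul_eq_mul, ← tsum_mul_left]
      exact tsum_congr fun n => by simp only [eval_smul, smul_eq_mul]; ring)

theorem weightedForm_apply (p r : ℝ[X]) :
    weightedForm hq p r = ∑' n : ℕ, (n : ℝ) * q ^ n * p.eval (n : ℝ) * r.eval (n : ℝ) :=
  rfl

theorem weightedForm_comm (p r : ℝ[X]) : weightedForm hq p r = weightedForm hq r p :=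
  tsum_congr fun n => by ring

theorem weightedForm_X_mul (p r : ℝ[X]) :
    weightedForm hq (X * p) r = weightedForm hq p (X * r) :=
  tsum_congr fun n => by simp only [eval_mul, eval_X]; ring

-- The weight `n qⁿ` vanishes at `n = 0`, so shifting the index produces no boundary term.
theorem weightedForm_shift (p r : ℝ[X]) :
    weightedForm hq ((X - 1) * p.comp (X - 1)) r =
      q * weightedForm hq p ((X + 1) * r.comp (X + 1)) := by
  rw [weightedForm_apply, (summable_weightedForm_term hq _ _).tsum_eq_zero_add,
    weightedForm_apply, ← tsum_mul_left]
  simp only [CharP.cast_eq_zero, zero_mul, zero_add]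
  refine tsum_congr fun n => ?_
  simp only [eval_mul, eval_comp, eval_sub, eval_add, eval_X, eval_one]
  push_cast
  ring_nf

theorem weightedForm_jacobiOp (p r : ℝ[X]) :
    weightedForm hq (jacobiOp q p) r = weightedForm hq p (jacobiOp q r) := by
  have h := weightedForm_shift hq r p
  rw [weightedForm_comm hq _ p] at h
  simp only [jacobiOp, map_sub, map_smul, LinearMap.sub_apply, LinearMap.smul_apply, smul_eq_mul,
    weightedForm_shift, weightedForm_X_mul, h]
  rw [weightedForm_comm hq ((X + 1) * p.comp (X + 1))]
  ring

theorem weightedForm_eq_zero_of_jacobiOp_eq_smul {p r : ℝ[X]} {μ ν : ℝ}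
    (hp : jacobiOp q p = μ • p) (hr : jacobiOp q r = ν • r) (hμν : μ ≠ ν) :
    weightedForm hq p r = 0 := by
  have h := weightedForm_jacobiOp hq p r
  rw [hp, hr, map_smul, map_smul, LinearMap.smul_apply, smul_eq_mul, smul_eq_mul] at h
  exact (mul_eq_mul_right_iff.mp h).resolve_left hμν

end WeightedForm

theorem ascPochhammer_succ_left_eval {S : Type*} [CommSemiring S] (s : ℕ) (y : S) :
    (ascPochhammer S (s + 1)).eval y = y * (ascPochhammer S s).eval (y + 1) := by
  simp [ascPochhammer_succ_left]

theorem mul_ascPochhammer_eval_add_one {S : Type*} [CommSemiring S] (s : ℕ) (y : S) :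
    y * (ascPochhammer S s).eval (y + 1) = (y + s) * (ascPochhammer S s).eval y := by
  rw [← ascPochhammer_succ_left_eval, ascPochhammer_succ_eval, mul_comm]

theorem ascPochhammer_second_difference {S : Type*} [CommRing S] (t : ℕ) (x : S) :
    2 * x * (ascPochhammer S (t + 1)).eval (x + 1) - (x - 1) * (ascPochhammer S (t + 1)).eval x
      - (x + 1) * (ascPochhammer S (t + 1)).eval (x + 1 + 1)
      = -((t + 1) * (t + 2)) * (ascPochhammer S t).eval (x + 1) := by
  have h := mul_ascPochhammer_eval_add_one (t + 1) (x + 1)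
  push_cast at h
  linear_combination -h - (x - 1) * ascPochhammer_succ_left_eval t x
    + (x - 2 - t) * ascPochhammer_succ_eval t (x + 1)

theorem prod_Icc_add_eq_ascPochhammer_eval {S : Type*} [CommSemiring S] (x : S) (s : ℕ) :
    ∏ t ∈ Icc 1 s, (x + t) = (ascPochhammer S s).eval (x + 1) := by
  induction s with
  | zero => simp
  | succ s ih =>
    rw [prod_Icc_succ_top (by omega), ih, ascPochhammer_succ_eval]
    push_cast
    ring

theorem cast_choose_succ_mul {k t : ℕ} (ht : t < k) :
    (k.choose (t + 1) : ℝ) * (t + 1) = k.choose t * (k - t) := by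
  rw [← Nat.cast_sub ht.le]
  exact_mod_cast Nat.choose_succ_right_eq k t

theorem cast_mul_choose_pred (j s : ℕ) :
    (j : ℝ) * (j - 1).choose s = j.choose (s + 1) * (s + 1) := by
  cases j with
  | zero => simp
  | succ j => exact_mod_cast Nat.add_one_mul_choose_eq j s

theorem cast_add_one_mul_choose (j s : ℕ) :
    ((j : ℝ) + 1) * j.choose s = (j.choose s + j.choose (s + 1)) * (s + 1) := by
  rw [← Nat.cast_add, ← Nat.choose_succ_succ']
  exact_mod_cast Nat.add_one_mul_choose_eq j s

theorem add_one_mul_choose_sub_mul_choose_pred (k s : ℕ) :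
    ((k : ℝ) + 1) * k.choose s - k * (k - 1).choose s = (s + 1) * k.choose s := by
  linear_combination cast_add_one_mul_choose k s - cast_mul_choose_pred k s

theorem choose_second_difference (k s : ℕ) :
    ((k : ℝ) + 2) * (k + 1).choose (s + 1) - 2 * ((k + 1) * k.choose (s + 1))
      + k * (k - 1).choose (s + 1) = (s + 2) * k.choose s := by
  have h₁ := cast_add_one_mul_choose (k + 1) (s + 1)
  have h₂ := cast_add_one_mul_choose k (s + 1)
  have h₃ := cast_mul_choose_pred k (s + 1)
  have h₄ : ((k + 1).choose (s + 2) : ℝ) = k.choose (s + 1) + k.choose (s + 2) := by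
    exact_mod_cast Nat.choose_succ_succ' k (s + 1)
  have h₅ : ((k + 1).choose (s + 1) : ℝ) = k.choose s + k.choose (s + 1) := by
    exact_mod_cast Nat.choose_succ_succ' k s
  push_cast at h₁ h₂ h₃
  linear_combination h₁ - 2 * h₂ + h₃ + (s + 2) * h₄ + (s + 2) * h₅

noncomputable def meixnerCoeff (k s : ℕ) : ℝ :=
  (-1) ^ s * k.choose s / (s + 1)!

theorem meixnerCoeff_succ_mul {k t : ℕ} (ht : t < k) :
    meixnerCoeff k (t + 1) * ((t + 1) * (t + 2)) = -((k - t) * meixnerCoeff k t) := by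
  simp only [meixnerCoeff, Nat.factorial_succ (t + 1)]
  push_cast
  field_simp
  linear_combination (-(-1) ^ t * (t + 2)) * cast_choose_succ_mul ht

noncomputable def meixnerPoly (q : ℝ) (k : ℕ) : ℝ[X] :=
  ∑ s ∈ range (k + 1), ((1 - q) ^ s * meixnerCoeff k s) • (ascPochhammer ℝ s).comp (X + 1)

theorem eval_meixnerPoly (q x : ℝ) {k N : ℕ} (hN : k + 1 ≤ N) :
    (meixnerPoly q k).eval x = ∑ s ∈ range N,
      (1 - q) ^ s * meixnerCoeff k s * (ascPochhammer ℝ s).eval (x + 1) := by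
  simp only [meixnerPoly, eval_finsetSum, eval_smul, eval_comp, eval_add, eval_X, eval_one,
    smul_eq_mul]
  refine sum_subset (range_subset_range.mpr hN) fun s _ hs => ?_
  simp [meixnerCoeff, Nat.choose_eq_zero_of_lt (by simpa using hs : k < s)]

theorem meixnerPoly_zero (q : ℝ) : meixnerPoly q 0 = 1 := by
  simp [meixnerPoly, meixnerCoeff]

theorem meixner_eq_eval (b : ℝ) (k n : ℕ) :
    meixner b k n = (meixnerPoly (b ^ 2) k).eval (n : ℝ) := by
  rw [meixner, eval_meixnerPoly _ _ le_rfl]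
  refine sum_congr rfl fun s _ => ?_
  rw [prod_Icc_add_eq_ascPochhammer_eval, meixnerCoeff]
  ring

theorem meixnerPoly_eval_jacobi (q x : ℝ) (k : ℕ) :
    (1 + q) * x * (meixnerPoly q k).eval x - (x - 1) * (meixnerPoly q k).eval (x - 1)
      - q * (x + 1) * (meixnerPoly q k).eval (x + 1)
      = (1 - q) * (k + 1) * (meixnerPoly q k).eval x := by
  obtain ⟨c, rfl⟩ : ∃ c, q = 1 - c := ⟨1 - q, by ring⟩
  simp only [eval_meixnerPoly _ _ le_rfl, sub_sub_cancel, sub_add_cancel]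
  set P := fun s => ascPochhammer ℝ s
  have hP₀ : 2 * x * (P 0).eval (x + 1) - (x - 1) * (P 0).eval x
      - (x + 1) * (P 0).eval (x + 1 + 1) = 0 := by
    simp only [P, ascPochhammer_zero, eval_one]; ring
  rw [← sub_eq_zero]
  -- The `cˢ`-part of the second difference of `P (t + 1)` cancels the `c^(t+1)`-part of `P t`.
  calc _ = ∑ s ∈ range (k + 1),
          (c ^ s * (meixnerCoeff k s * (2 * x * (P s).eval (x + 1) - (x - 1) * (P s).eval x
              - (x + 1) * (P s).eval (x + 1 + 1)))
            + c ^ (s + 1) * ((s - k) * meixnerCoeff k s * (P s).eval (x + 1))) := by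
        simp only [mul_sum, ← sum_sub_distrib]
        refine sum_congr rfl fun s _ => ?_
        linear_combination
          (c ^ (s + 1) * meixnerCoeff k s) * mul_ascPochhammer_eval_add_one s (x + 1)
    _ = ∑ t ∈ range k,
          (c ^ (t + 1) * (meixnerCoeff k (t + 1) * (2 * x * (P (t + 1)).eval (x + 1)
              - (x - 1) * (P (t + 1)).eval x - (x + 1) * (P (t + 1)).eval (x + 1 + 1)))
            + c ^ (t + 1) * ((t - k) * meixnerCoeff k t * (P t).eval (x + 1))) := by
        rw [sum_add_distrib, sum_range_succ', sum_range_succ (fun s => c ^ (s + 1) * _),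
          sum_add_distrib]
        simp only [hP₀, sub_self, mul_zero, zero_mul, add_zero]
    _ = 0 := sum_eq_zero fun t ht => by
        linear_combination
          (c ^ (t + 1) * meixnerCoeff k (t + 1)) * ascPochhammer_second_difference t x
          + (-c ^ (t + 1) * (P t).eval (x + 1)) * meixnerCoeff_succ_mul (mem_range.mp ht)

theorem meixnerPoly_succ_eval (q x : ℝ) (k : ℕ) :
    (k + 2) * (meixnerPoly q (k + 1)).eval x
      = (k + 1) * (1 + q) * (meixnerPoly q k).eval x - (1 - q) * x * (meixnerPoly q k).eval x
        - k * q * (meixnerPoly q (k - 1)).eval x := by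
  obtain ⟨c, rfl⟩ : ∃ c, q = 1 - c := ⟨1 - q, by ring⟩
  rw [eval_meixnerPoly (k := k + 1) _ _ le_rfl,
    eval_meixnerPoly (k := k) (N := k + 2) _ _ (by omega),
    eval_meixnerPoly (k := k - 1) (N := k + 2) _ _ (by omega), sub_sub_cancel]
  set g : ℕ → ℝ := fun s => c ^ s * ((-1) ^ s / (s + 1)! * (ascPochhammer ℝ s).eval (x + 1))
  have hg (j s : ℕ) :
      c ^ s * meixnerCoeff j s * (ascPochhammer ℝ s).eval (x + 1) = j.choose s * g s := by
    simp only [g, meixnerCoeff]; ring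
  have hx (s : ℕ) : c * x * g s = -((s + 2) * g (s + 1)) - (s + 1) * c * g s := by
    simp only [g, ascPochhammer_succ_eval, Nat.factorial_succ (s + 1)]
    push_cast
    field_simp
    ring
  set A : ℕ → ℝ := fun s =>
    (k + 2) * (k + 1).choose s - 2 * ((k + 1) * k.choose s) + k * (k - 1).choose s
  have hA_zero : A 0 = 0 := by simp only [A, Nat.choose_zero_right]; push_cast; ring
  have hA_succ (s : ℕ) : A (s + 1) = (s + 2) * k.choose s := choose_second_difference k s
  simp only [hg]
  rw [← sub_eq_zero]
  calc _ = ∑ s ∈ range (k + 2), (A s * g s - (s + 2) * k.choose s * g (s + 1)) := by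
        simp only [mul_sum, ← sum_sub_distrib]
        refine sum_congr rfl fun s _ => ?_
        linear_combination (k.choose s : ℝ) * hx s
          + (c * g s) * add_one_mul_choose_sub_mul_choose_pred k s
    _ = 0 := by
        rw [sum_sub_distrib, sum_range_succ' (fun s => A s * g s),
          sum_range_succ (fun s => (s + 2 : ℝ) * k.choose s * g (s + 1))]
        simp only [hA_zero, hA_succ, Nat.choose_succ_self, Nat.cast_zero, zero_mul, mul_zero,
          add_zero, sub_self]

theorem jacobiOp_meixnerPoly (q : ℝ) (k : ℕ) :
    jacobiOp q (meixnerPoly q k) = ((1 - q) * (k + 1)) • meixnerPoly q k := by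
  refine Polynomial.funext fun x => ?_
  simp only [jacobiOp, eval_sub, eval_smul, eval_mul, eval_X, eval_one, eval_add, eval_comp,
    smul_eq_mul]
  linear_combination meixnerPoly_eval_jacobi q x k

theorem meixnerPoly_succ (q : ℝ) (k : ℕ) :
    (k + 2 : ℝ) • meixnerPoly q (k + 1) = ((k + 1) * (1 + q)) • meixnerPoly q k
      - (1 - q) • (X * meixnerPoly q k) - (k * q) • meixnerPoly q (k - 1) := by
  refine Polynomial.funext fun x => ?_
  simp only [eval_sub, eval_smul, eval_mul, eval_X, smul_eq_mul]
  linear_combination meixnerPoly_succ_eval q x k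

section MeixnerNorm

variable {q : ℝ} (hq : |q| < 1)

theorem weightedForm_meixnerPoly_eq_zero_of_ne {j k : ℕ} (hjk : j ≠ k) :
    weightedForm hq (meixnerPoly q j) (meixnerPoly q k) = 0 := by
  refine weightedForm_eq_zero_of_jacobiOp_eq_smul hq (jacobiOp_meixnerPoly q j)
    (jacobiOp_meixnerPoly q k) fun h => hjk ?_
  have hq1 : 1 - q ≠ 0 := by linarith [le_abs_self q]
  exact_mod_cast add_right_cancel (mul_left_cancel₀ hq1 h)

theorem weightedForm_meixnerPoly_succ_self (k : ℕ) :
    (k + 2) * weightedForm hq (meixnerPoly q (k + 1)) (meixnerPoly q (k + 1))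
      = (k + 1) * q * weightedForm hq (meixnerPoly q k) (meixnerPoly q k) := by
  have h₁ := congrArg (weightedForm hq · (meixnerPoly q (k + 1))) (meixnerPoly_succ q k)
  have h₂ := congrArg (weightedForm hq · (meixnerPoly q k)) (meixnerPoly_succ q (k + 1))
  simp only [map_sub, map_smul, LinearMap.sub_apply, LinearMap.smul_apply, smul_eq_mul,
    Nat.add_sub_cancel] at h₁ h₂
  rw [weightedForm_X_mul, weightedForm_comm hq (meixnerPoly q (k + 1)) (X * _)] at h₂
  simp only [weightedForm_meixnerPoly_eq_zero_of_ne hq (by omega : k ≠ k + 1),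
    weightedForm_meixnerPoly_eq_zero_of_ne hq (by omega : k - 1 ≠ k + 1),
    weightedForm_meixnerPoly_eq_zero_of_ne hq (by omega : k + 2 ≠ k),
    weightedForm_meixnerPoly_eq_zero_of_ne hq (by omega : k + 1 ≠ k)] at h₁ h₂
  push_cast at h₁ h₂
  linear_combination h₁ - h₂

theorem weightedForm_meixnerPoly_self (k : ℕ) :
    weightedForm hq (meixnerPoly q k) (meixnerPoly q k)
      = q ^ (k + 1) / ((k + 1) * (1 - q) ^ 2) := by
  have hq1 : 1 - q ≠ 0 := by linarith [le_abs_self q]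
  induction k with
  | zero =>
    simp only [meixnerPoly_zero, weightedForm_apply, eval_one, mul_one]
    rw [tsum_coe_mul_geometric_of_norm_lt_one (by simpa using hq)]
    ring
  | succ k ih =>
    have h := weightedForm_meixnerPoly_succ_self hq k
    rw [ih] at h
    field_simp at h
    push_cast
    field_simp
    linear_combination h

end MeixnerNorm

theorem meixnerPsi_sq (b : ℝ) (k n : ℕ) :
    meixnerPsi b k n ^ 2 = (1 - b ^ 2) ^ 2 * ((k + 1) / b ^ (2 * (k + 1)))
      * (n * (b ^ 2) ^ n * (meixnerPoly (b ^ 2) k).eval (n : ℝ)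
        * (meixnerPoly (b ^ 2) k).eval (n : ℝ)) := by
  have h₁ : √(n : ℝ) ^ 2 = n := Real.sq_sqrt n.cast_nonneg
  have h₂ : √((k + 1) / b ^ (2 * (k + 1))) ^ 2 = (k + 1) / b ^ (2 * (k + 1)) :=
    Real.sq_sqrt (div_nonneg (by positivity) (by rw [pow_mul]; positivity))
  have h₃ : ((-1 : ℝ) ^ n) ^ 2 = 1 := by rw [← pow_mul, pow_mul', neg_one_sq, one_pow]
  calc _ = ((-1) ^ n) ^ 2 * (b ^ 2) ^ n * √(n : ℝ) ^ 2
        * ((1 - b ^ 2) ^ 2 * √((k + 1) / b ^ (2 * (k + 1))) ^ 2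
          * (meixnerPoly (b ^ 2) k).eval (n : ℝ) ^ 2) := by
        rw [meixnerPsi, meixner_eq_eval]; ring
    _ = _ := by rw [h₁, h₂, h₃]; ring

theorem meixnerPsi_eigen (b : ℝ) (k n : ℕ) (hn : 1 ≤ n) :
    (1 + b ^ 2) * n * meixnerPsi b k n
        + b * √(((n : ℝ) - 1) * n) * meixnerPsi b k (n - 1)
        + b * √(n * (n + 1)) * meixnerPsi b k (n + 1)
      = (1 - b ^ 2) * (k + 1) * meixnerPsi b k n := by
  obtain ⟨m, rfl⟩ : ∃ m, n = m + 1 := ⟨n - 1, by omega⟩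
  have h := meixnerPoly_eval_jacobi (b ^ 2) (m + 1) k
  have h₁ : √(m : ℝ) * √(m : ℝ) = m := Real.mul_self_sqrt m.cast_nonneg
  have h₂ : √((m : ℝ) + 2) * √((m : ℝ) + 2) = m + 2 := Real.mul_self_sqrt (by positivity)
  simp only [meixnerPsi, meixner_eq_eval, Nat.add_sub_cancel]
  push_cast
  rw [add_sub_cancel_right] at h ⊢
  rw [show (m : ℝ) + 1 + 1 = m + 2 by ring] at h ⊢
  rw [Real.sqrt_mul m.cast_nonneg, Real.sqrt_mul (by positivity : (0 : ℝ) ≤ m + 1)]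
  set K := (1 - b ^ 2) * √((k + 1) / b ^ (2 * (k + 1)))
  -- `√(m (m+1)) √m = m √(m+1)` and `√((m+1)(m+2)) √(m+2) = (m+2) √(m+1)` pull the common factor
  -- `(-1)ᵐ⁺¹ bᵐ⁺¹ √(m+1) K` out of every term, leaving the difference equation `h`.
  linear_combination ((-1) ^ (m + 1) * b ^ (m + 1) * √((m : ℝ) + 1) * K) * h
      + ((-1) ^ m * b ^ (m + 1) * √((m : ℝ) + 1) * K * (meixnerPoly (b ^ 2) k).eval (m : ℝ)) * h₁
      + ((-1) ^ m * b ^ (m + 3) * √((m : ℝ) + 1) * K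
        * (meixnerPoly (b ^ 2) k).eval ((m : ℝ) + 2)) * h₂

/-- The Theorem of Appendix 1: for `0 < b < 1`, `ψ^(k)` is a normalized `ℓ²(ℤ≥1)`
eigenvector of the symmetric tridiagonal matrix `ℋ₀` with entries
`(1+b²) n δ_{nm} + b√(m(m+1)) δ_{n,m+1} + b√(n(n+1)) δ_{m,n+1}`, with eigenvalue
`(1−b²)(k+1)`; hence `ℋ₀` has the discrete spectrum `E_n = |1−b²| n`, `n ≥ 1`, with
normalized `ℓ²` eigenvectors. -/
theorem meixner_psi_normalized_eigenvector (b : ℝ) (hb0 : 0 < b) (hb1 : b < 1) (k : ℕ) :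
    Summable (fun n : ℕ => if 1 ≤ n then (meixnerPsi b k n) ^ 2 else 0) ∧
    (∑' n : ℕ, if 1 ≤ n then (meixnerPsi b k n) ^ 2 else 0) = 1 ∧
    (∀ n : ℕ, 1 ≤ n →
      (1 + b ^ 2) * n * meixnerPsi b k n
          + b * Real.sqrt (((n : ℝ) - 1) * n) * meixnerPsi b k (n - 1)
          + b * Real.sqrt (n * (n + 1)) * meixnerPsi b k (n + 1)
        = (1 - b ^ 2) * (k + 1) * meixnerPsi b k n) := by
  have hq : |b ^ 2| < 1 := by rw [abs_of_nonneg (sq_nonneg b)]; nlinarith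
  have hsq : (fun n : ℕ => if 1 ≤ n then meixnerPsi b k n ^ 2 else 0) = fun n : ℕ =>
      (1 - b ^ 2) ^ 2 * ((k + 1) / b ^ (2 * (k + 1)))
        * (n * (b ^ 2) ^ n * (meixnerPoly (b ^ 2) k).eval (n : ℝ)
          * (meixnerPoly (b ^ 2) k).eval (n : ℝ)) := by
    funext n
    split_ifs with hn
    · exact meixnerPsi_sq b k n
    · simp [show n = 0 by omega]
  refine ⟨?_, ?_, meixnerPsi_eigen b k⟩
  · rw [hsq]
    exact (summable_weightedForm_term hq _ _).mul_left _
  · rw [hsq, tsum_mul_left, ← weightedForm_apply hq, weightedForm_meixnerPoly_self, pow_mul]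
    have : 1 - b ^ 2 ≠ 0 := by nlinarith
    field_simp
end
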